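/- arXiv:2009.01116 — 3 statements merged into one kernel-verified Lean document; each statement's English description precedes it below -/
import Mathlib

section
/- Suppose f ∈ H^1(ℝ × 𝕋³) satisfies the waveguide Sobolev embedding ‖f‖²_{L⁴} ≤ C₄² ‖f‖²_{H¹*} where ‖f‖²_{H¹*} := ‖f‖²_{Ḣ¹} + c*‖f‖²_{L²}, and assume ‖f‖_{H¹*} < ‖W‖_{Ḣ¹(ℝ⁴)} and E*(f) := (1/2)‖f‖²_{H¹*} − (1/4)‖f‖⁴_{L⁴} < (1−δ₀) E_{ℝ⁴}(W) for some δ₀ > 0. Then there exists δ̄ = δ̄(δ₀) > 0 with ‖f‖²_{H¹*} < (1−δ̄) ‖W‖²_{Ḣ¹(ℝ⁴)}. -/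
open MeasureTheory Set

noncomputable section

def gradSq (f : EuclideanSpace ℝ (Fin 4) → ℝ) (x : EuclideanSpace ℝ (Fin 4)) : ℝ :=
  ‖fderiv ℝ f x‖ ^ 2

/-- Fundamental domain `ℝ × [0,1)³` of the waveguide `ℝ × 𝕋³` inside `ℝ⁴`. -/
def wgDomain : Set (EuclideanSpace ℝ (Fin 4)) :=
  {x | ∀ i : Fin 4, 1 ≤ (i : ℕ) → x i ∈ Ico (0 : ℝ) 1}

/-- Functions on the waveguide `ℝ × 𝕋³` are `1`-periodic in the last three coordinates. -/
def WgPeriodic (f : EuclideanSpace ℝ (Fin 4) → ℝ) : Prop :=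
  ∀ (x : EuclideanSpace ℝ (Fin 4)) (i : Fin 4), 1 ≤ (i : ℕ) →
    f (x + EuclideanSpace.single i (1 : ℝ)) = f x

/-- The modified squared Sobolev norm `‖f‖²_{H¹*} = ‖f‖²_{Ḣ¹} + c ‖f‖²_{L²}` on `ℝ × 𝕋³`. -/
def H1s (c : ℝ) (f : EuclideanSpace ℝ (Fin 4) → ℝ) : ℝ :=
  (∫ x in wgDomain, gradSq f x) + c * ∫ x in wgDomain, |f x| ^ 2

/-- `‖f‖⁴_{L⁴(ℝ × 𝕋³)}`. -/
def L4w (f : EuclideanSpace ℝ (Fin 4) → ℝ) : ℝ :=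
  ∫ x in wgDomain, |f x| ^ 4

/-- Membership of `f` in `H¹(ℝ × 𝕋³)` (with the relevant integrabilities). -/
def WgH1 (f : EuclideanSpace ℝ (Fin 4) → ℝ) : Prop :=
  ContDiff ℝ 1 f ∧ WgPeriodic f ∧
    IntegrableOn (fun x => |f x| ^ 2) wgDomain volume ∧
    IntegrableOn (fun x => gradSq f x) wgDomain volume ∧
    IntegrableOn (fun x => |f x| ^ 4) wgDomain volume

/-- energy trapping, first conclusion. If `f` satisfies the waveguide Sobolev
embedding `‖f‖⁴_{L⁴} ≤ C₄⁴ (‖f‖²_{H¹*})²`, `‖f‖²_{H¹*} < ‖W‖²_{Ḣ¹(ℝ⁴)} = 1/C₄⁴` and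
`E*(f) < (1-δ₀) E_{ℝ⁴}(W) = (1-δ₀)/(4C₄⁴)`, then `‖f‖²_{H¹*} < (1-δ̄) ‖W‖²_{Ḣ¹(ℝ⁴)}`
for some `δ̄ = δ̄(δ₀) > 0`. -/
theorem energy_trapping_norm (δ₀ : ℝ) (hδ₀ : 0 < δ₀) :
    ∃ δb : ℝ, 0 < δb ∧
      ∀ (C c : ℝ) (f : EuclideanSpace ℝ (Fin 4) → ℝ), 0 < C → 0 < c → WgH1 f →
        L4w f ≤ C ^ 4 * (H1s c f) ^ 2 →
        H1s c f < 1 / C ^ 4 →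
        (1 / 2) * H1s c f - (1 / 4) * L4w f < (1 - δ₀) * (1 / (4 * C ^ 4)) →
        H1s c f < (1 - δb) * (1 / C ^ 4) := by
  refine ⟨Real.sqrt δ₀, Real.sqrt_pos.mpr hδ₀, ?_⟩
  intro C c f hC hc _ hL4 hH1 hE
  have hC4 : (0 : ℝ) < C ^ 4 := by positivity
  set H := H1s c f with hH
  set t := C ^ 4 * H with ht
  have ht1 : t < 1 := by
    have := (mul_lt_mul_iff_right₀ hC4).mpr hH1
    rwa [mul_one_div, div_self (ne_of_gt hC4)] at this
  have hkey : 2 * t - t ^ 2 < 1 - δ₀ := by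
    have h1 : (1 / 2) * H - (1 / 4) * (C ^ 4 * H ^ 2) < (1 - δ₀) * (1 / (4 * C ^ 4)) :=
      lt_of_le_of_lt (by nlinarith [hL4]) hE
    have h2 := (mul_lt_mul_iff_right₀ hC4).mpr h1
    have h3 : (1 - δ₀) * (C ^ 4 * (1 / (4 * C ^ 4))) = (1 - δ₀) / 4 := by
      field_simp
    nlinarith [h2]
  have hsq : δ₀ < (1 - t) ^ 2 := by nlinarith
  have h1t : 0 < 1 - t := by linarith
  have : Real.sqrt δ₀ < 1 - t := by
    have := Real.sqrt_lt_sqrt hδ₀.le hsq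
    rwa [Real.sqrt_sq h1t.le] at this
  have htfin : t < 1 - Real.sqrt δ₀ := by linarith
  rw [mul_one_div, lt_div_iff₀ hC4]
  nlinarith [htfin]
end
end

section
/- Under the hypotheses of the previous statement (‖f‖_{H¹*} < ‖W‖_{Ḣ¹(ℝ⁴)} and E*(f) < (1−δ₀)E_{ℝ⁴}(W)), there exists δ̄ = δ̄(δ₀) > 0 such that E*(f) ≥ (1/4)(1+δ̄) ‖f‖²_{H¹*}. -/
open MeasureTheory Set

noncomputable section

/-- energy trapping, coercivity of the modified energy. Under
`‖f‖²_{H¹*} < ‖W‖²_{Ḣ¹(ℝ⁴)} = 1/C₄⁴` and `E*(f) < (1-δ₀) E_{ℝ⁴}(W) = (1-δ₀)/(4C₄⁴)`,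
there is `δ̄ = δ̄(δ₀) > 0` with `E*(f) ≥ (1/4)(1+δ̄) ‖f‖²_{H¹*}`. -/
theorem energy_trapping_coercive (δ₀ : ℝ) (hδ₀ : 0 < δ₀) :
    ∃ δb : ℝ, 0 < δb ∧
      ∀ (C c : ℝ) (f : EuclideanSpace ℝ (Fin 4) → ℝ), 0 < C → 0 < c → WgH1 f →
        L4w f ≤ C ^ 4 * (H1s c f) ^ 2 →
        H1s c f < 1 / C ^ 4 →
        (1 / 2) * H1s c f - (1 / 4) * L4w f < (1 - δ₀) * (1 / (4 * C ^ 4)) →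
        (1 / 2) * H1s c f - (1 / 4) * L4w f ≥ (1 / 4) * (1 + δb) * H1s c f := by

  refine ⟨Real.sqrt (min δ₀ (1/2)), Real.sqrt_pos.2 (lt_min hδ₀ (by norm_num)), ?_⟩
  intro C c f hC hc _ hL4 hx1 hE
  set x := H1s c f with hxdef
  set L := L4w f with hLdef
  have hC4 : (0:ℝ) < C ^ 4 := by positivity
  have hx0 : 0 ≤ x := by
    have h1 : 0 ≤ ∫ y in wgDomain, gradSq f y :=
      integral_nonneg fun y => by unfold gradSq; positivity
    have h2 : 0 ≤ ∫ y in wgDomain, |f y| ^ 2 :=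
      integral_nonneg fun y => by positivity
    have := mul_nonneg hc.le h2
    simp only [hxdef, H1s]; linarith
  have hL0 : 0 ≤ L := integral_nonneg fun y => by positivity
  set s := Real.sqrt (min δ₀ (1/2)) with hsdef
  have hd0 : (0:ℝ) ≤ min δ₀ (1/2) := le_min hδ₀.le (by norm_num)
  have hs2 : s ^ 2 = min δ₀ (1/2) := Real.sq_sqrt hd0
  have hs0 : 0 < s := Real.sqrt_pos.2 (lt_min hδ₀ (by norm_num))
  have hs1 : s < 1 := by
    nlinarith [min_le_right δ₀ (1/2 : ℝ), hs2, hs0]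
  have hdle : min δ₀ (1/2) ≤ δ₀ := min_le_left _ _
  -- multiply energy bound by 4 C^4
  have hE' : 2 * (C^4 * x) - C^4 * L < 1 - s^2 := by
    have h := (mul_lt_mul_of_pos_left hE hC4)
    have : C ^ 4 * ((1 - δ₀) * (1 / (4 * C ^ 4))) = (1 - δ₀)/4 := by
      field_simp
    rw [this] at h
    nlinarith
  have hy1 : C^4 * x < 1 := by
    have h := (lt_div_iff₀ hC4).mp hx1
    linarith [h, mul_comm x (C^4)]
  have hCL : C^4 * L ≤ (C^4 * x)^2 := by nlinarith
  -- deduce 1 - C^4 x > s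
  have hkey : C^4 * x ≤ 1 - s := by
    nlinarith [sq_nonneg (1 - C^4 * x - s), sq_nonneg (1 - C^4 * x + s)]
  nlinarith [mul_nonneg hx0 (sub_nonneg.2 hkey), mul_le_mul_of_nonneg_left hL4 (by norm_num : (0:ℝ) ≤ 1/4)]
end
end

section
/- Let a, b, ℓ ≥ 0, C > 0 and δ₀ > 0, and set E** := (1/2)(a² + b²) − (1/4)ℓ + (C⁴/4) b⁴. Assume ℓ ≤ C⁴ (a² + b²)² (from Sobolev), a² < 1/C⁴, and E** < (1−δ₀)/(4C⁴). Then there exists δ̄ = δ̄(δ₀) > 0 with a² < (1−δ̄)/C⁴. -/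
/-- abstract form of the energy trapping for `E**`. With `a = ‖f‖_{Ḣ¹}`,
`b² = c*‖f‖²_{L²}`, `ℓ = ‖f‖⁴_{L⁴}`, `C = C₄`: if `ℓ ≤ C⁴(a²+b²)²` (Sobolev), `a² < 1/C⁴`
and `E** = (1/2)(a²+b²) - (1/4)ℓ + (C⁴/4)b⁴ < (1-δ₀)/(4C⁴)`, then `a² < (1-δ̄)/C⁴` for
some `δ̄ = δ̄(δ₀) > 0`. -/
theorem energy_trapping_Estarstar (δ₀ : ℝ) (hδ₀ : 0 < δ₀) :
    ∃ δb : ℝ, 0 < δb ∧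
      ∀ C a b ℓ : ℝ, 0 < C → 0 ≤ a → 0 ≤ b → 0 ≤ ℓ →
        ℓ ≤ C ^ 4 * (a ^ 2 + b ^ 2) ^ 2 →
        a ^ 2 < 1 / C ^ 4 →
        (1 / 2) * (a ^ 2 + b ^ 2) - (1 / 4) * ℓ + (C ^ 4 / 4) * b ^ 4 <
          (1 - δ₀) / (4 * C ^ 4) →
        a ^ 2 < (1 - δb) / C ^ 4 := by
  refine ⟨min (Real.sqrt δ₀) (1/2), lt_min (Real.sqrt_pos.mpr hδ₀) (by norm_num), ?_⟩
  intro C a b ℓ hC ha hb hℓ0 hℓ ha2 hE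
  have hC4 : (0:ℝ) < C ^ 4 := by positivity
  have hu : C ^ 4 * a ^ 2 < 1 := by
    have h := (lt_div_iff₀ hC4).mp ha2
    linarith [h]
  -- from hE, hℓ and hu : (1 - C^4 a^2)^2 > δ₀
  have hE' : (1/2) * (a^2+b^2) - (1/4) * (C^4 * (a^2+b^2)^2) + (C^4/4) * b^4 <
      (1 - δ₀) / (4 * C ^ 4) := by linarith
  have hE'' : 2 * (C^4*(a^2+b^2)) - (C^4*(a^2+b^2))^2 + (C^4*b^2)^2 < 1 - δ₀ := by
    have h4C : (0:ℝ) < 4 * C ^ 4 := by positivity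
    have := (mul_lt_mul_iff_of_pos_right h4C).mpr hE'
    calc 2 * (C^4*(a^2+b^2)) - (C^4*(a^2+b^2))^2 + (C^4*b^2)^2
        = ((1/2) * (a^2+b^2) - (1/4) * (C^4 * (a^2+b^2)^2) + (C^4/4) * b^4) * (4 * C^4) := by
          ring
      _ < (1 - δ₀) / (4 * C ^ 4) * (4 * C ^ 4) := this
      _ = 1 - δ₀ := by field_simp
  have key : δ₀ < (1 - C ^ 4 * a ^ 2) ^ 2 := by
    nlinarith [mul_nonneg (mul_nonneg hC4.le (sq_nonneg b)) (sub_pos.mpr hu).le,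
      sq_nonneg (C^4*b^2)]
  have hsq : Real.sqrt δ₀ < 1 - C ^ 4 * a ^ 2 :=
    (Real.sqrt_lt' (sub_pos.mpr hu)).mpr key
  have : C ^ 4 * a ^ 2 < 1 - min (Real.sqrt δ₀) (1/2) := by
    have := min_le_left (Real.sqrt δ₀) (1/2)
    linarith
  rw [lt_div_iff₀ hC4]
  linarith
end
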